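/- Let A, B, C, D be positive definite n×n matrices, U, W unitary n×n matrices, and r ≥ 0. Then for all k = 1, ..., 2n, the sum over i ≤ k of s_i^{2r} of the block diagonal matrix diag(A^{1/2} U B^{1/2}, C^{1/2} W D^{1/2}) is at most the sum over i ≤ k of s_i^r of the block diagonal matrix diag(AUB, CWD). -/

import Mathlib

open Matrix Finset
open scoped ComplexOrder

variable {n m : ℕ}

/-- Real power of a Hermitian matrix via the spectral theorem (junk value `0` otherwise). -/
noncomputable def mrpow (A : Matrix (Fin n) (Fin n) ℂ) (r : ℝ) : Matrix (Fin n) (Fin n) ℂ :=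
  if hA : A.IsHermitian then
    (hA.eigenvectorUnitary : Matrix (Fin n) (Fin n) ℂ) *
      Matrix.diagonal (fun i => ((hA.eigenvalues i ^ r : ℝ) : ℂ)) *
      (hA.eigenvectorUnitary : Matrix (Fin n) (Fin n) ℂ)ᴴ
  else 0

/-- The decreasing rearrangement of a tuple of reals. -/
noncomputable def dsort (x : Fin n → ℝ) (i : Fin n) : ℝ := x (Tuple.sort x i.rev)

/-- Singular values of a complex matrix, in decreasing order. -/
noncomputable def sv (A : Matrix (Fin n) (Fin n) ℂ) : Fin n → ℝ :=
  dsort (fun i => Real.sqrt ((Matrix.isHermitian_conjTranspose_mul_self A).eigenvalues i))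

/-- Eigenvalues of a Hermitian matrix in decreasing order (junk value `0` otherwise). -/
noncomputable def evals (A : Matrix (Fin n) (Fin n) ℂ) : Fin n → ℝ :=
  if hA : A.IsHermitian then dsort hA.eigenvalues else 0

/-- Weak majorization `x ≺_w y`. -/
def WMaj (x y : Fin n → ℝ) : Prop :=
  ∀ k : Fin n, ∑ i ∈ Finset.Iic k, dsort x i ≤ ∑ i ∈ Finset.Iic k, dsort y i

/-- Weak log-majorization `x ≺_{w log} y`. -/
def WLogMaj (x y : Fin n → ℝ) : Prop :=
  ∀ k : Fin n, ∏ i ∈ Finset.Iic k, dsort x i ≤ ∏ i ∈ Finset.Iic k, dsort y i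

/-- Log-majorization `x ≺_{log} y`. -/
def LogMaj (x y : Fin n → ℝ) : Prop :=
  WLogMaj x y ∧ ∏ i, x i = ∏ i, y i

/-- The `t`-geometric mean of matrices. -/
noncomputable def gmt (t : ℝ) (A B : Matrix (Fin n) (Fin n) ℂ) : Matrix (Fin n) (Fin n) ℂ :=
  mrpow A (1/2) * mrpow (mrpow A (-(1/2)) * B * mrpow A (-(1/2))) t * mrpow A (1/2)

/-- The geometric mean `A # B` of matrices. -/
noncomputable def gm (A B : Matrix (Fin n) (Fin n) ℂ) : Matrix (Fin n) (Fin n) ℂ :=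
  gmt (1/2) A B

/-- The trace norm (sum of singular values). -/
noncomputable def traceNorm (A : Matrix (Fin n) (Fin n) ℂ) : ℝ := ∑ i, sv A i

/-- A seminorm on matrices is unitarily invariant if `N (U * X * V) = N X` for all unitaries. -/
def UInv (N : Matrix (Fin m) (Fin m) ℂ → ℝ) : Prop :=
  ∀ U ∈ Matrix.unitaryGroup (Fin m) ℂ, ∀ V ∈ Matrix.unitaryGroup (Fin m) ℂ,
    ∀ X : Matrix (Fin m) (Fin m) ℂ, N (U * X * V) = N X

/-- The `2n × 2n` block matrix with the given `n × n` blocks. -/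
noncomputable def bm (X Y Z W : Matrix (Fin n) (Fin n) ℂ) :
    Matrix (Fin (n + n)) (Fin (n + n)) ℂ :=
  Matrix.reindex finSumFinEquiv finSumFinEquiv (Matrix.fromBlocks X Y Z W)

/-- The matrix absolute value `|A| = (AᴴA)^{1/2}`. -/
noncomputable def matAbs (A : Matrix (Fin n) (Fin n) ℂ) : Matrix (Fin n) (Fin n) ℂ :=
  mrpow (Aᴴ * A) (1/2)

private lemma abelKey (c t : ℕ → ℝ) (K : ℕ)
    (hmono : ∀ i j, i ≤ j → j ≤ K → c j ≤ c i)
    (hS : ∀ j, j ≤ K → ∑ i ∈ Finset.range (j+1), t i ≤ 0) :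
    ∑ i ∈ Finset.range (K+1), c i * t i ≤ c K * ∑ i ∈ Finset.range (K+1), t i := by
  induction K with
  | zero => simp
  | succ K ih =>
    have h1 : ∑ i ∈ Finset.range (K+1), c i * t i ≤ c K * ∑ i ∈ Finset.range (K+1), t i :=
      ih (fun i j hij hj => hmono i j hij (hj.trans (Nat.le_succ K)))
        (fun j hj => hS j (hj.trans (Nat.le_succ K)))
    rw [Finset.sum_range_succ, Finset.sum_range_succ (f := t)]
    have h2 : c K * ∑ i ∈ Finset.range (K+1), t i ≤ c (K+1) * ∑ i ∈ Finset.range (K+1), t i := by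
      have hSK := hS K (Nat.le_succ K)
      have hcc := hmono K (K+1) (Nat.le_succ K) le_rfl
      nlinarith
    nlinarith

private lemma abelNeg (c t : ℕ → ℝ) (K : ℕ)
    (hmono : ∀ i j, i ≤ j → j ≤ K → c j ≤ c i) (hc0 : 0 ≤ c K)
    (hS : ∀ j, j ≤ K → ∑ i ∈ Finset.range (j+1), t i ≤ 0) :
    ∑ i ∈ Finset.range (K+1), c i * t i ≤ 0 := by
  have := abelKey c t K hmono hS
  have := hS K le_rfl
  nlinarith

private lemma tomic (a b : ℕ → ℝ) (K : ℕ)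
    (ha : ∀ i, i ≤ K → 0 < a i) (hb : ∀ i, i ≤ K → 0 < b i)
    (hmono : ∀ i j, i ≤ j → j ≤ K → a j ≤ a i)
    (hprod : ∀ j, j ≤ K → ∏ i ∈ Finset.range (j+1), a i ≤ ∏ i ∈ Finset.range (j+1), b i) :
    ∑ i ∈ Finset.range (K+1), a i ≤ ∑ i ∈ Finset.range (K+1), b i := by
  set t : ℕ → ℝ := fun i => Real.log (a i) - Real.log (b i) with ht
  have h1 : ∀ i, i ≤ K → a i - b i ≤ a i * t i := by
    intro i hi
    have he : Real.exp (Real.log (b i) - Real.log (a i)) = b i / a i := by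
      rw [Real.exp_sub, Real.exp_log (hb _ hi), Real.exp_log (ha _ hi)]
    have h2 := Real.add_one_le_exp (Real.log (b i) - Real.log (a i))
    rw [he] at h2
    have hai := ha i hi
    have h3 := mul_le_mul_of_nonneg_left h2 hai.le
    rw [mul_div_cancel₀ _ (ne_of_gt hai)] at h3
    simp only [ht]
    nlinarith
  have h2 : ∑ i ∈ Finset.range (K+1), a i * t i ≤ 0 := by
    refine abelNeg a t K hmono (ha K le_rfl).le (fun j hj => ?_)
    have hpa : 0 < ∏ i ∈ Finset.range (j+1), a i :=
      Finset.prod_pos (fun i hi => ha i (by simp at hi; omega))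
    have hlog : ∑ i ∈ Finset.range (j+1), t i
        = Real.log (∏ i ∈ Finset.range (j+1), a i) - Real.log (∏ i ∈ Finset.range (j+1), b i) := by
      rw [Real.log_prod (fun i hi => ne_of_gt (ha i (by simp at hi; omega))),
        Real.log_prod (fun i hi => ne_of_gt (hb i (by simp at hi; omega)))]
      simp [ht, Finset.sum_sub_distrib]
    rw [hlog, sub_nonpos]
    exact Real.log_le_log hpa (hprod j hj)
  have h3 : ∑ i ∈ Finset.range (K+1), (a i - b i) ≤ ∑ i ∈ Finset.range (K+1), a i * t i :=
    Finset.sum_le_sum (fun i hi => h1 i (by simp at hi; omega))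
  rw [Finset.sum_sub_distrib] at h3
  linarith

section Seq
private lemma sum_Iic_eq_range {m : ℕ} (f : Fin m → ℝ) (k : Fin m) :
    ∑ i ∈ Finset.Iic k, f i
      = ∑ j ∈ Finset.range (k.1+1), (fun j => if h : j < m then f ⟨j, h⟩ else 0) j := by
  refine Finset.sum_bij' (fun a _ => a.1) (fun b hb => ⟨b, by simp at hb; omega⟩) ?_ ?_ ?_ ?_ ?_
  · intro a ha; simp at ha ⊢; omega
  · intro b hb; simp at hb ⊢; exact Fin.mk_le_of_le_val (by omega)
  · intro a ha; simp
  · intro b hb; simp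
  · intro a ha; simp

private lemma prod_Iic_eq_range {m : ℕ} (f : Fin m → ℝ) (k : Fin m) :
    ∏ i ∈ Finset.Iic k, f i
      = ∏ j ∈ Finset.range (k.1+1), (fun j => if h : j < m then f ⟨j, h⟩ else 1) j := by
  refine Finset.prod_bij' (fun a _ => a.1) (fun b hb => ⟨b, by simp at hb; omega⟩) ?_ ?_ ?_ ?_ ?_
  · intro a ha; simp at ha ⊢; omega
  · intro b hb; simp at hb ⊢; exact Fin.mk_le_of_le_val (by omega)
  · intro a ha; simp
  · intro b hb; simp
  · intro a ha; simp

/-- decreasing rearrangement as a permutation composition -/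
noncomputable def dperm {m : ℕ} (x : Fin m → ℝ) : Equiv.Perm (Fin m) :=
  Fin.revPerm.trans (Tuple.sort x)

private lemma dsort_eq_comp {m : ℕ} (x : Fin m → ℝ) : dsort x = x ∘ (dperm x) := rfl

private lemma dsort_antitone {m : ℕ} (x : Fin m → ℝ) : Antitone (dsort x) := by
  intro i j hij
  have h := Tuple.monotone_sort x (Fin.rev_le_rev.mpr hij)
  simpa [dsort] using h

private lemma dsort_nonneg {m : ℕ} (x : Fin m → ℝ) (hx : ∀ i, 0 ≤ x i) (i : Fin m) :
    0 ≤ dsort x i := hx _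

private lemma dsort_pos {m : ℕ} (x : Fin m → ℝ) (hx : ∀ i, 0 < x i) (i : Fin m) :
    0 < dsort x i := hx _

private lemma dsort_comp_mono {m : ℕ} (g : ℝ → ℝ) (hg : Monotone g) (x : Fin m → ℝ) :
    dsort (g ∘ x) = g ∘ dsort x := by
  have h1 : Monotone ((g ∘ x) ∘ ⇑(Tuple.sort x)) := hg.comp (Tuple.monotone_sort x)
  have h2 : (g ∘ x) ∘ ⇑(Tuple.sort x) = (g ∘ x) ∘ ⇑(Tuple.sort (g ∘ x)) :=
    Tuple.comp_sort_eq_comp_iff_monotone.mpr h1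
  funext i
  have h3 := congrFun h2 i.rev
  simpa [dsort] using h3.symm
end Seq

section TopProd

private lemma strictMono_val_le {K m : ℕ} (f : Fin K → Fin m) (hf : StrictMono f)
    (j : Fin K) : (j : ℕ) ≤ (f j : ℕ) := by
  obtain ⟨t, ht⟩ := j
  induction t with
  | zero => simp
  | succ t ih =>
    have h' : t < K := by omega
    have h1 := ih h'
    have hv1 : ((⟨t, h'⟩ : Fin K) : ℕ) = t := rfl
    have hv2 : ((⟨t+1, ht⟩ : Fin K) : ℕ) = t+1 := rfl
    have h2 : f ⟨t, h'⟩ < f ⟨t+1, ht⟩ := hf (by simp [Fin.lt_def])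
    have h3 := Fin.lt_def.mp h2
    omega

private lemma prod_orderEmb {G : Type*} [CommMonoid G] {m K : ℕ} (d : Fin m → G) (T : Finset (Fin m)) (hT : T.card = K) :
    ∏ i ∈ T, d i = ∏ j : Fin K, d (T.orderEmbOfFin hT j) := by
  have himg : Finset.image (T.orderEmbOfFin hT) Finset.univ = T := by
    apply Finset.coe_injective
    rw [Finset.coe_image, Finset.coe_univ, Set.image_univ, Finset.range_orderEmbOfFin]
  conv_lhs => rw [← himg]
  rw [Finset.prod_image (fun a _ b _ h => (T.orderEmbOfFin hT).injective h)]

private lemma orderEmb_Iic {m : ℕ} (k : Fin m) (j : Fin (k.1+1)) :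
    ((Finset.Iic k).orderEmbOfFin (Fin.card_Iic k) j : Fin m) = ⟨j.1, by omega⟩ := by
  have h := Finset.orderEmbOfFin_unique (Fin.card_Iic k)
    (f := fun j : Fin (k.1+1) => (⟨j.1, by omega⟩ : Fin m))
    (fun x => Finset.mem_Iic.mpr (Fin.mk_le_of_le_val (Nat.lt_succ_iff.mp x.2)))
    (fun a b hab => by exact hab)
  exact (congrFun h j).symm

/-- product over any (k+1)-subset of nonneg values is at most the top-(k+1) product -/
private lemma top_prod_bound {m : ℕ} (y : Fin m → ℝ) (hy : ∀ i, 0 ≤ y i)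
    (S : Finset (Fin m)) (k : Fin m) (hcard : S.card = k.1 + 1) :
    ∏ i ∈ S, y i ≤ ∏ i ∈ Finset.Iic k, dsort y i := by
  set e := dperm y
  set T : Finset (Fin m) := S.image e.symm with hTdef
  have hTcard : T.card = k.1 + 1 := by
    rw [hTdef, Finset.card_image_of_injective _ e.symm.injective, hcard]
  have h1 : ∏ i ∈ S, y i = ∏ j ∈ T, dsort y j := by
    rw [hTdef, Finset.prod_image (fun a _ b _ h => e.symm.injective h)]
    rw [dsort_eq_comp]
    apply Finset.prod_congr rfl
    intro i _
    simp [e]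
  rw [h1, prod_orderEmb (dsort y) T hTcard,
    prod_orderEmb (dsort y) (Finset.Iic k) (Fin.card_Iic k)]
  apply Finset.prod_le_prod
  · intro j _; exact dsort_nonneg y (fun i => hy _) _
  · intro j _
    rw [orderEmb_Iic]
    apply dsort_antitone
    rw [Fin.le_def]
    exact strictMono_val_le _ (T.orderEmbOfFin hTcard).strictMono j
end TopProd

section CauchyBinet

private lemma det_mul_expand {k m : ℕ} (M : Matrix (Fin k) (Fin m) ℂ) (N : Matrix (Fin m) (Fin k) ℂ) :
    (M * N).det = ∑ p : Fin k → Fin m, (M.submatrix id p).det * ∏ i, N (p i) i :=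
  calc
    (M * N).det = ∑ σ : Equiv.Perm (Fin k), Equiv.Perm.sign σ •
        ∑ p ∈ Fintype.piFinset (fun _ : Fin k => (Finset.univ : Finset (Fin m))),
          ∏ i, M (σ i) (p i) * N (p i) i := by
      simp only [Matrix.det_apply, Matrix.mul_apply, Finset.prod_univ_sum]
    _ = ∑ p : Fin k → Fin m, ∑ σ : Equiv.Perm (Fin k),
          Equiv.Perm.sign σ • ∏ i, M (σ i) (p i) * N (p i) i := by
      simp only [Finset.smul_sum, Fintype.piFinset_univ]
      rw [Finset.sum_comm]
    _ = ∑ p : Fin k → Fin m, (M.submatrix id p).det * ∏ i, N (p i) i := by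
      refine Finset.sum_congr rfl fun p _ => ?_
      rw [Matrix.det_apply, Finset.sum_mul]
      refine Finset.sum_congr rfl fun σ _ => ?_
      rw [Finset.prod_mul_distrib, smul_mul_assoc]
      rfl

/-- the index type for Cauchy-Binet grouping -/
private abbrev CBIdx (m k : ℕ) := {S : Finset (Fin m) // S.card = k} × Equiv.Perm (Fin k)

private def cbMap {m k : ℕ} (q : CBIdx m k) : Fin k → Fin m :=
  fun i => q.1.1.orderEmbOfFin q.1.2 (q.2 i)

private lemma cbMap_image {m k : ℕ} (q : CBIdx m k) :
    Finset.image (cbMap q) Finset.univ = q.1.1 := by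
  apply Finset.coe_injective
  rw [Finset.coe_image, Finset.coe_univ, Set.image_univ]
  have h : Set.range (cbMap q) = Set.range (q.1.1.orderEmbOfFin q.1.2) :=
    q.2.surjective.range_comp _
  rw [h, Finset.range_orderEmbOfFin]

private lemma sum_injective_eq {k m : ℕ} (g : (Fin k → Fin m) → ℂ) :
    ∑ p ∈ Finset.univ.filter (fun p : Fin k → Fin m => Function.Injective p), g p
      = ∑ q : CBIdx m k, g (cbMap q) := by
  refine (Finset.sum_bij (fun q _ => cbMap q) ?_ ?_ ?_ ?_).symm
  · intro q _
    simp only [Finset.mem_filter, Finset.mem_univ, true_and]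
    exact (q.1.1.orderEmbOfFin q.1.2).injective.comp q.2.injective
  · intro q1 _ q2 _ h
    have hS : q1.1 = q2.1 := by
      apply Subtype.ext
      have h' : cbMap q1 = cbMap q2 := h
      rw [← cbMap_image q1, ← cbMap_image q2, h']
    obtain ⟨⟨S1, hS1⟩, σ1⟩ := q1
    obtain ⟨⟨S2, hS2⟩, σ2⟩ := q2
    simp only [Subtype.mk.injEq] at hS
    subst hS
    have hσ : σ1 = σ2 := by
      refine Equiv.ext fun i => ?_
      exact (S1.orderEmbOfFin hS1).injective (congrFun h i)
    rw [hσ]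
  · intro p hp
    simp only [Finset.mem_filter, Finset.mem_univ, true_and] at hp
    set S : Finset (Fin m) := Finset.image p Finset.univ with hSdef
    have hScard : S.card = k := by
      rw [hSdef, Finset.card_image_of_injective _ hp, Finset.card_univ, Fintype.card_fin]
    set τ : Fin k ≃ {x // x ∈ S} := Equiv.ofBijective
      (fun i => (⟨p i, by rw [hSdef]; exact Finset.mem_image_of_mem p (Finset.mem_univ i)⟩
        : {x // x ∈ S}))
      (by
        constructor
        · intro a b hab
          exact hp (congrArg Subtype.val hab)
        · rintro ⟨x, hx⟩
          rw [hSdef] at hx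
          obtain ⟨i, _, hi⟩ := Finset.mem_image.mp hx
          exact ⟨i, Subtype.ext hi⟩) with hτ
    refine ⟨⟨⟨S, hScard⟩, τ.trans (S.orderIsoOfFin hScard).toEquiv.symm⟩, Finset.mem_univ _, ?_⟩
    funext i
    show (S.orderEmbOfFin hScard) ((S.orderIsoOfFin hScard).toEquiv.symm (τ i)) = p i
    have h1 : ∀ b, (S.orderEmbOfFin hScard b : Fin m) = ((S.orderIsoOfFin hScard) b : Fin m) :=
      fun b => (Finset.coe_orderIsoOfFin_apply S hScard b).symm
    rw [h1]
    show (((S.orderIsoOfFin hScard) ((S.orderIsoOfFin hScard).symm (τ i))) : Fin m) = p i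
    rw [OrderIso.apply_symm_apply]
    simp [hτ]; rfl
  · intros; rfl

/-- Cauchy–Binet for `Yᴴ D Y`. -/
private lemma cauchy_binet {k m : ℕ} (Y : Matrix (Fin m) (Fin k) ℂ) (μ : Fin m → ℂ) :
    (Yᴴ * Matrix.diagonal μ * Y).det
      = ∑ S : {S : Finset (Fin m) // S.card = k},
          (∏ s ∈ S.1, μ s) * (star ((Y.submatrix (S.1.orderEmbOfFin S.2) id).det)
            * (Y.submatrix (S.1.orderEmbOfFin S.2) id).det) := by
  rw [det_mul_expand]
  rw [← Finset.sum_filter_add_sum_filter_not Finset.univ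
      (fun p : Fin k → Fin m => Function.Injective p)]
  have hzero : ∑ p ∈ Finset.univ.filter
      (fun p : Fin k → Fin m => ¬ Function.Injective p),
      ((Yᴴ * Matrix.diagonal μ).submatrix id p).det * ∏ i, Y (p i) i = 0 := by
    refine Finset.sum_eq_zero fun p hp => ?_
    replace hp := Finset.mem_filter.mp hp
    simp only [Function.Injective] at hp
    push_neg at hp
    obtain ⟨a, b, hab, hne⟩ := hp.2
    have hd : ((Yᴴ * Matrix.diagonal μ).submatrix id p).det = 0 := by
      rw [← Matrix.det_transpose]
      refine Matrix.det_zero_of_row_eq hne ?_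
      funext j
      simp [Matrix.transpose_apply, hab]
    rw [hd, zero_mul]
  rw [hzero, add_zero]
  rw [sum_injective_eq (fun p => ((Yᴴ * Matrix.diagonal μ).submatrix id p).det * ∏ i, Y (p i) i)]
  rw [Fintype.sum_prod_type]
  refine Finset.sum_congr rfl fun S _ => ?_
  set e := S.1.orderEmbOfFin S.2
  set YS := Y.submatrix (⇑e) id with hYS
  have hterm : ∀ σ : Equiv.Perm (Fin k),
      ((Yᴴ * Matrix.diagonal μ).submatrix id (cbMap (S, σ))).det * ∏ i, Y (cbMap (S, σ) i) i
        = (∏ s ∈ S.1, μ s) * ((Equiv.Perm.sign σ : ℂ) * star (YS.det))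
            * ∏ i, YS (σ i) i := by
    intro σ
    have h1 : (Yᴴ * Matrix.diagonal μ).submatrix id (cbMap (S, σ))
        = (Yᴴ.submatrix id (cbMap (S, σ))) * Matrix.diagonal (fun i => μ (cbMap (S, σ) i)) := by
      ext i j
      simp only [Matrix.submatrix_apply, Matrix.mul_apply, Matrix.diagonal, Matrix.of_apply,
        Matrix.conjTranspose_apply, id_eq]
      rw [Finset.sum_eq_single (cbMap (S, σ) j)] <;> simp +contextual [eq_comm]
    rw [h1, Matrix.det_mul, Matrix.det_diagonal]
    have h2 : ∏ i, μ (cbMap (S, σ) i) = ∏ s ∈ S.1, μ s := by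
      rw [show (fun i => μ (cbMap (S, σ) i)) = fun i => (fun t => μ (e t)) (σ i) from rfl]
      rw [Equiv.prod_comp σ (fun t => μ (e t))]
      exact (prod_orderEmb μ S.1 S.2).symm
    have h3 : (Yᴴ.submatrix id (cbMap (S, σ))) = (Y.submatrix (cbMap (S, σ)) id)ᴴ := by
      ext i j; simp [Matrix.submatrix_apply, Matrix.conjTranspose_apply]
    have h4 : Y.submatrix (cbMap (S, σ)) id = YS.submatrix (⇑σ) id := rfl
    have h5 : (Yᴴ.submatrix id (cbMap (S, σ))).det
        = (Equiv.Perm.sign σ : ℂ) * star YS.det := by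
      rw [h3, Matrix.det_conjTranspose, h4, Matrix.det_permute]
      rw [star_mul']
      congr 1
      rcases Int.units_eq_one_or (Equiv.Perm.sign σ) with h | h <;> simp [h]
    rw [h2, h5]
    have h6 : ∏ i, Y (cbMap (S, σ) i) i = ∏ i, YS (σ i) i := rfl
    rw [h6]
    ring
  rw [Finset.sum_congr rfl (fun σ _ => hterm σ)]
  rw [Matrix.det_apply' YS, Finset.mul_sum, Finset.mul_sum]
  refine Finset.sum_congr rfl fun σ _ => ?_
  ring
end CauchyBinet

section MatrixBasics

private lemma unitary_mul_conjTranspose {m : ℕ} {V : Matrix (Fin m) (Fin m) ℂ}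
    (hV : V ∈ Matrix.unitaryGroup (Fin m) ℂ) : V * Vᴴ = 1 := by
  rw [← Matrix.star_eq_conjTranspose]; exact Matrix.mem_unitaryGroup_iff.mp hV

private lemma unitary_conjTranspose_mul {m : ℕ} {V : Matrix (Fin m) (Fin m) ℂ}
    (hV : V ∈ Matrix.unitaryGroup (Fin m) ℂ) : Vᴴ * V = 1 := by
  rw [← Matrix.star_eq_conjTranspose]; exact Matrix.mem_unitaryGroup_iff'.mp hV

private lemma unitary_isUnit_det {m : ℕ} {V : Matrix (Fin m) (Fin m) ℂ}
    (hV : V ∈ Matrix.unitaryGroup (Fin m) ℂ) : IsUnit V.det :=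
  IsUnit.of_mul_eq_one _ (by rw [← Matrix.det_mul, unitary_mul_conjTranspose hV, Matrix.det_one])

private lemma mulVec_zero_of_isUnit {m : ℕ} {X : Matrix (Fin m) (Fin m) ℂ}
    (hX : IsUnit X.det) {x : Fin m → ℂ} (h : X *ᵥ x = 0) : x = 0 := by
  have h1 : X⁻¹ *ᵥ (X *ᵥ x) = x := by
    rw [Matrix.mulVec_mulVec, Matrix.nonsing_inv_mul _ hX, Matrix.one_mulVec]
  rw [h, Matrix.mulVec_zero] at h1
  exact h1.symm

private lemma posDef_gram {m k : ℕ} (A : Matrix (Fin m) (Fin k) ℂ)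
    (h : ∀ x : Fin k → ℂ, A *ᵥ x = 0 → x = 0) : (Aᴴ * A).PosDef := by
  refine Matrix.PosDef.of_dotProduct_mulVec_pos (Matrix.isHermitian_conjTranspose_mul_self A) (fun x hx => ?_)
  rw [← Matrix.mulVec_mulVec, Matrix.dotProduct_mulVec, Matrix.vecMul_conjTranspose, star_star]
  exact Matrix.dotProduct_star_self_pos_iff.mpr (fun hAx => hx (h x hAx))

private lemma eigvals_congr {m : ℕ} {X Y : Matrix (Fin m) (Fin m) ℂ} (h : X = Y)
    (hX : X.IsHermitian) (hY : Y.IsHermitian) : hX.eigenvalues = hY.eigenvalues := by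
  subst h; rfl

private lemma sv_eq_sqrt_dsort {m : ℕ} (X : Matrix (Fin m) (Fin m) ℂ) (i : Fin m) :
    sv X i = Real.sqrt (dsort (Matrix.isHermitian_conjTranspose_mul_self X).eigenvalues i) := by
  have h := dsort_comp_mono Real.sqrt (fun _ _ h => Real.sqrt_le_sqrt h)
    ((Matrix.isHermitian_conjTranspose_mul_self X).eigenvalues)
  exact congrFun h i

end MatrixBasics

section LemmaA

private lemma lemmaA {m K : ℕ} (G : Matrix (Fin m) (Fin m) ℂ) (hG : G.PosSemidef)
    (Wm : Matrix (Fin m) (Fin K) ℂ) (kk : Fin m) (hK : K = kk.1 + 1) :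
    (Wmᴴ * G * Wm).det
      ≤ ((∏ i ∈ Finset.Iic kk, dsort hG.1.eigenvalues i : ℝ) : ℂ) * (Wmᴴ * Wm).det := by
  set hH := hG.1 with hhH
  set Un := (hH.eigenvectorUnitary : Matrix (Fin m) (Fin m) ℂ) with hUn
  set Y := Unᴴ * Wm with hY
  have hYH : Yᴴ = Wmᴴ * Un := by
    rw [hY, Matrix.conjTranspose_mul, Matrix.conjTranspose_conjTranspose]
  have h1 : Wmᴴ * G * Wm = Yᴴ * (Matrix.diagonal (RCLike.ofReal ∘ hH.eigenvalues) : Matrix (Fin m) (Fin m) ℂ) * Y := by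
    rw [hYH, hY]
    have hspec := hH.spectral_theorem
    rw [Unitary.conjStarAlgAut_apply, Matrix.star_eq_conjTranspose] at hspec
    rw [show Wmᴴ * Un * (Matrix.diagonal (RCLike.ofReal ∘ hH.eigenvalues) : Matrix (Fin m) (Fin m) ℂ) * (Unᴴ * Wm)
        = Wmᴴ * (Un * (Matrix.diagonal (RCLike.ofReal ∘ hH.eigenvalues) : Matrix (Fin m) (Fin m) ℂ) * Unᴴ) * Wm by
      simp only [Matrix.mul_assoc]]
    rw [← hspec]
  have h2 : Wmᴴ * Wm = Yᴴ * Matrix.diagonal (fun _ : Fin m => (1:ℂ)) * Y := by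
    rw [Matrix.diagonal_one, Matrix.mul_one, hYH, hY]
    rw [Matrix.mul_assoc, ← Matrix.mul_assoc Un, unitary_mul_conjTranspose
      (hH.eigenvectorUnitary.2 : _), Matrix.one_mul]
  rw [h1, h2, cauchy_binet, cauchy_binet, Finset.mul_sum]
  apply Finset.sum_le_sum
  intro S _
  set dd := (Y.submatrix (⇑(S.1.orderEmbOfFin S.2)) id).det with hdd
  have hsd : star dd * dd = ((Complex.normSq dd : ℝ) : ℂ) := by
    rw [Complex.normSq_eq_conj_mul_self]; rfl
  rw [hsd]
  have hprod : (∏ s ∈ S.1, (RCLike.ofReal ∘ hH.eigenvalues) s)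
      = ((∏ s ∈ S.1, hH.eigenvalues s : ℝ) : ℂ) := by
    push_cast; rfl
  rw [hprod]
  have hle : ∏ s ∈ S.1, hH.eigenvalues s ≤ ∏ i ∈ Finset.Iic kk, dsort hH.eigenvalues i :=
    top_prod_bound hH.eigenvalues (fun i => hG.eigenvalues_nonneg i) S.1 kk (by rw [S.2, hK])
  rw [show (∏ s ∈ S.1, (fun _ : Fin m => (1:ℂ)) s) = 1 by simp, one_mul]
  rw [← Complex.ofReal_mul, ← Complex.ofReal_mul, Complex.real_le_real]
  exact mul_le_mul_of_nonneg_right hle (Complex.normSq_nonneg dd)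

end LemmaA

section Core

private lemma core {m : ℕ} (N R : Matrix (Fin m) (Fin m) ℂ) (d : Fin m → ℝ)
    (hd : ∀ i, 0 ≤ d i) (hR : IsUnit R.det)
    (hNR : N * R = R * Matrix.diagonal (RCLike.ofReal ∘ d))
    (kk : Fin m) :
    (∏ i ∈ Finset.Iic kk, dsort d i)^2
      ≤ ∏ i ∈ Finset.Iic kk, dsort (Matrix.isHermitian_conjTranspose_mul_self N).eigenvalues i := by
  classical
  set K := kk.1 + 1 with hKdef
  set S : Finset (Fin m) := (Finset.Iic kk).image (dperm d) with hSdef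
  have hcard : S.card = K := by
    rw [hSdef, Finset.card_image_of_injective _ (dperm d).injective, Fin.card_Iic]
  have hprodS : ∏ i ∈ S, d i = ∏ i ∈ Finset.Iic kk, dsort d i := by
    rw [hSdef, Finset.prod_image (fun a _ b _ h => (dperm d).injective h)]
    exact Finset.prod_congr rfl (fun i _ => rfl)
  set Wm := R.submatrix id (⇑(S.orderEmbOfFin hcard)) with hWm
  have hNW : N * Wm = Wm * Matrix.diagonal
      (fun j : Fin K => ((d (S.orderEmbOfFin hcard j) : ℝ) : ℂ)) := by
    ext i j
    have happ : (N * R) i (S.orderEmbOfFin hcard j)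
        = R i (S.orderEmbOfFin hcard j) * (RCLike.ofReal ∘ d) (S.orderEmbOfFin hcard j) := by
      rw [hNR, Matrix.mul_diagonal]
    have hL : (N * Wm) i j = (N * R) i (S.orderEmbOfFin hcard j) := by
      simp [hWm, Matrix.mul_apply, Matrix.submatrix_apply]
    rw [hL, happ, Matrix.mul_diagonal]
    simp [hWm]
  -- Gram matrix is positive definite
  have hWWpd : (Wmᴴ * Wm).PosDef := by
    refine posDef_gram Wm (fun x hx => ?_)
    set y : Fin m → ℂ := fun l => ∑ j : Fin K, if S.orderEmbOfFin hcard j = l then x j else 0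
      with hy
    have hRy : R *ᵥ y = Wm *ᵥ x := by
      funext i
      simp only [Matrix.mulVec, dotProduct, hy, Finset.mul_sum, hWm,
        Matrix.submatrix_apply, id_eq]
      rw [Finset.sum_comm]
      refine Finset.sum_congr rfl fun j _ => ?_
      rw [Finset.sum_eq_single (S.orderEmbOfFin hcard j)] <;> simp +contextual [eq_comm]
    have hy0 : y = 0 := mulVec_zero_of_isUnit hR (by rw [hRy, hx])
    funext j
    have hyj : y (S.orderEmbOfFin hcard j) = x j := by
      simp only [hy]
      rw [Finset.sum_eq_single j] <;>
        simp +contextual [fun a (h : ¬ a = j) => (S.orderEmbOfFin hcard).injective.ne h]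
    rw [← hyj, hy0]; rfl
  -- determinant identity
  have hdetEq : (Wmᴴ * (Nᴴ * N) * Wm).det
      = (((∏ i ∈ Finset.Iic kk, dsort d i)^2 : ℝ) : ℂ) * (Wmᴴ * Wm).det := by
    have h1 : Wmᴴ * (Nᴴ * N) * Wm = (N * Wm)ᴴ * (N * Wm) := by
      rw [Matrix.conjTranspose_mul]
      simp only [Matrix.mul_assoc]
    rw [h1, hNW, Matrix.conjTranspose_mul, Matrix.diagonal_conjTranspose]
    rw [show (Matrix.diagonal (star fun j : Fin K => ((d (S.orderEmbOfFin hcard j) : ℝ) : ℂ)))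
          * Wmᴴ * (Wm * Matrix.diagonal
            (fun j : Fin K => ((d (S.orderEmbOfFin hcard j) : ℝ) : ℂ)))
        = Matrix.diagonal (star fun j : Fin K => ((d (S.orderEmbOfFin hcard j) : ℝ) : ℂ))
          * (Wmᴴ * Wm)
          * Matrix.diagonal (fun j : Fin K => ((d (S.orderEmbOfFin hcard j) : ℝ) : ℂ)) by
      simp only [Matrix.mul_assoc]]
    rw [Matrix.det_mul, Matrix.det_mul, Matrix.det_diagonal, Matrix.det_diagonal]
    have hprodv : ∏ j : Fin K, ((d (S.orderEmbOfFin hcard j) : ℝ) : ℂ)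
        = ((∏ i ∈ S, d i : ℝ) : ℂ) := by
      rw [← prod_orderEmb (fun i => ((d i : ℝ) : ℂ)) S hcard]
      push_cast; rfl
    have hstar : ∏ j : Fin K,
        (star fun j : Fin K => ((d (S.orderEmbOfFin hcard j) : ℝ) : ℂ)) j
        = ((∏ i ∈ S, d i : ℝ) : ℂ) := by
      rw [← hprodv]
      refine Finset.prod_congr rfl fun j _ => ?_
      simp [Pi.star_apply, Complex.conj_ofReal]
    rw [hstar, hprodv, hprodS]
    push_cast
    ring
  -- apply lemmaA
  have hA := lemmaA (Nᴴ * N) (Matrix.posSemidef_conjTranspose_mul_self N) Wm kk hKdef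
  rw [hdetEq] at hA
  -- extract real inequality
  obtain ⟨g, hgpos, hg⟩ : ∃ g : ℝ, 0 < g ∧ (Wmᴴ * Wm).det = (g : ℂ) := by
    have h0 := hWWpd.det_pos
    have him := (Complex.lt_def.mp h0).2
    refine ⟨(Wmᴴ * Wm).det.re, (Complex.lt_def.mp h0).1, ?_⟩
    apply Complex.ext
    · rfl
    · simp [← him]
  rw [hg, ← Complex.ofReal_mul, ← Complex.ofReal_mul, Complex.real_le_real] at hA
  exact (mul_le_mul_iff_left₀ hgpos).mp hA

end Core

section ThmStar

private lemma sqrt_rpow_two_mul {t : ℝ} (ht : 0 ≤ t) (r : ℝ) :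
    Real.sqrt t ^ (2 * r) = t ^ r := by
  rw [Real.sqrt_eq_rpow, ← Real.rpow_mul ht]
  rw [show (1/2 : ℝ) * (2 * r) = r by ring]

private lemma thmStar {m : ℕ} (P Q V : Matrix (Fin m) (Fin m) ℂ)
    (hP : P.PosDef) (hQ : Q.PosDef) (hV : V ∈ Matrix.unitaryGroup (Fin m) ℂ)
    (r : ℝ) (hr : 0 ≤ r) (k : Fin m) :
    ∑ i ∈ Finset.Iic k, sv (P * V * Q) i ^ (2 * r)
      ≤ ∑ i ∈ Finset.Iic k, sv (P * (P * V * Q) * Q) i ^ r := by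
  classical
  set X := P * V * Q with hXdef
  set Y := P * X * Q with hYdef
  set N := Vᴴ * Y with hNdef
  have hPdet : IsUnit P.det := isUnit_iff_ne_zero.mpr hP.det_pos.ne'
  have hQdet : IsUnit Q.det := isUnit_iff_ne_zero.mpr hQ.det_pos.ne'
  have hQidet : IsUnit (Q⁻¹).det := isUnit_iff_ne_zero.mpr hQ.inv.det_pos.ne'
  have hVdet : IsUnit V.det := unitary_isUnit_det hV
  have hXdet : IsUnit X.det := by
    rw [hXdef, Matrix.det_mul, Matrix.det_mul]
    exact (hPdet.mul hVdet).mul hQdet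
  have hYdet : IsUnit Y.det := by
    rw [hYdef, Matrix.det_mul, Matrix.det_mul]
    exact (hPdet.mul hXdet).mul hQdet
  set hHerm := Matrix.isHermitian_conjTranspose_mul_self X with hHermdef
  set d := hHerm.eigenvalues with hddef
  have hXgram : (Xᴴ * X).PosDef := posDef_gram X (fun x hx => mulVec_zero_of_isUnit hXdet hx)
  have hdpos : ∀ i, 0 < d i := fun i => hXgram.eigenvalues_pos i
  set U0 := (hHerm.eigenvectorUnitary : Matrix (Fin m) (Fin m) ℂ) with hU0def
  have hU1 : U0ᴴ * U0 = 1 := by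
    rw [← Matrix.star_eq_conjTranspose]; exact hHerm.eigenvectorUnitary.2.1
  have hU2 : U0 * U0ᴴ = 1 := by
    rw [← Matrix.star_eq_conjTranspose]; exact hHerm.eigenvectorUnitary.2.2
  have hU0det : IsUnit U0.det :=
    IsUnit.of_mul_eq_one _ (by rw [← Matrix.det_mul, hU2, Matrix.det_one])
  set R := Q⁻¹ * U0 with hRdef
  have hRdet : IsUnit R.det := by
    rw [hRdef, Matrix.det_mul]; exact hQidet.mul hU0det
  have hPh : Pᴴ = P := hP.1
  have hQh : Qᴴ = Q := hQ.1
  have hQN : Q * N = (Xᴴ * X) * Q := by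
    rw [hNdef, hYdef, hXdef]
    simp only [Matrix.conjTranspose_mul, hPh, hQh, Matrix.mul_assoc]
  have hNQi : N * Q⁻¹ = Q⁻¹ * (Xᴴ * X) := by
    calc N * Q⁻¹ = Q⁻¹ * (Q * N) * Q⁻¹ := by
          rw [← Matrix.mul_assoc, Matrix.nonsing_inv_mul _ hQdet, Matrix.one_mul]
      _ = Q⁻¹ * ((Xᴴ * X) * Q) * Q⁻¹ := by rw [hQN]
      _ = Q⁻¹ * (Xᴴ * X) * (Q * Q⁻¹) := by simp only [Matrix.mul_assoc]
      _ = Q⁻¹ * (Xᴴ * X) := by rw [Matrix.mul_nonsing_inv _ hQdet, Matrix.mul_one]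
  have hXU : (Xᴴ * X) * U0 = U0 * Matrix.diagonal (RCLike.ofReal ∘ d) := by
    have hspec := hHerm.spectral_theorem
    rw [Unitary.conjStarAlgAut_apply, Matrix.star_eq_conjTranspose] at hspec
    conv_lhs => rw [hspec]
    rw [Matrix.mul_assoc, hU1, Matrix.mul_one]
  have hNR : N * R = R * Matrix.diagonal (RCLike.ofReal ∘ d) := by
    rw [hRdef, ← Matrix.mul_assoc, hNQi, Matrix.mul_assoc, hXU, ← Matrix.mul_assoc]
  -- identify eigenvalues of NᴴN with those of YᴴY
  have hNNYY : Nᴴ * N = Yᴴ * Y := by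
    rw [hNdef, Matrix.conjTranspose_mul, Matrix.conjTranspose_conjTranspose,
      Matrix.mul_assoc, ← Matrix.mul_assoc V, unitary_mul_conjTranspose hV, Matrix.one_mul]
  have hEig : (Matrix.isHermitian_conjTranspose_mul_self N).eigenvalues
      = (Matrix.isHermitian_conjTranspose_mul_self Y).eigenvalues :=
    eigvals_congr hNNYY _ _
  set ed := (Matrix.isHermitian_conjTranspose_mul_self Y).eigenvalues with heddef
  have hYgram : (Yᴴ * Y).PosDef := posDef_gram Y (fun x hx => mulVec_zero_of_isUnit hYdet hx)
  have hedpos : ∀ i, 0 < ed i := fun i => hYgram.eigenvalues_pos i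
  -- base log-majorization
  have hbase : ∀ kj : Fin m,
      ∏ i ∈ Finset.Iic kj, dsort d i ≤ ∏ i ∈ Finset.Iic kj, sv Y i := by
    intro kj
    have hc := core N R d (fun i => (hdpos i).le) hRdet hNR kj
    rw [hEig] at hc
    have hq2 : ∏ i ∈ Finset.Iic kj, dsort ed i = (∏ i ∈ Finset.Iic kj, sv Y i)^2 := by
      rw [← Finset.prod_pow]
      refine Finset.prod_congr rfl fun i _ => ?_
      rw [sv_eq_sqrt_dsort, Real.sq_sqrt (dsort_nonneg ed (fun t => (hedpos t).le) i)]
    rw [hq2] at hc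
    have hp0 : 0 ≤ ∏ i ∈ Finset.Iic kj, dsort d i :=
      Finset.prod_nonneg fun i _ => dsort_nonneg d (fun t => (hdpos t).le) i
    have hq0 : 0 ≤ ∏ i ∈ Finset.Iic kj, sv Y i :=
      Finset.prod_nonneg fun i _ => by
        rw [sv_eq_sqrt_dsort]; exact Real.sqrt_nonneg _
    calc ∏ i ∈ Finset.Iic kj, dsort d i
        = Real.sqrt ((∏ i ∈ Finset.Iic kj, dsort d i)^2) := (Real.sqrt_sq hp0).symm
      _ ≤ Real.sqrt ((∏ i ∈ Finset.Iic kj, sv Y i)^2) := Real.sqrt_le_sqrt hc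
      _ = ∏ i ∈ Finset.Iic kj, sv Y i := Real.sqrt_sq hq0
  -- rewrite the left side summands
  have hLHS : ∑ i ∈ Finset.Iic k, sv X i ^ (2*r) = ∑ i ∈ Finset.Iic k, (dsort d i) ^ r := by
    refine Finset.sum_congr rfl fun i _ => ?_
    rw [sv_eq_sqrt_dsort, sqrt_rpow_two_mul (dsort_nonneg d (fun t => (hdpos t).le) i)]
  rw [hLHS]
  -- convert to ℕ-indexed sums and apply tomic
  rw [sum_Iic_eq_range (fun i => (dsort d i) ^ r) k, sum_Iic_eq_range (fun i => sv Y i ^ r) k]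
  refine tomic _ _ k.1 ?_ ?_ ?_ ?_
  · intro i hi
    have him : i < m := lt_of_le_of_lt hi k.2
    simp only [dif_pos him]
    exact Real.rpow_pos_of_pos (dsort_pos d hdpos _) r
  · intro i hi
    have him : i < m := lt_of_le_of_lt hi k.2
    simp only [dif_pos him]
    refine Real.rpow_pos_of_pos ?_ r
    rw [sv_eq_sqrt_dsort]
    exact Real.sqrt_pos.mpr (dsort_pos ed hedpos _)
  · intro i j hij hj
    have hjm : j < m := lt_of_le_of_lt hj k.2
    have him : i < m := lt_of_lt_of_le (lt_of_le_of_lt hij hjm) le_rfl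
    simp only [dif_pos him, dif_pos hjm]
    exact Real.rpow_le_rpow (dsort_nonneg d (fun t => (hdpos t).le) _)
      (dsort_antitone d (by exact Fin.mk_le_mk.mpr hij)) hr
  · intro j hj
    have hjm : j < m := lt_of_le_of_lt hj k.2
    set kj : Fin m := ⟨j, hjm⟩ with hkj
    have e1 : ∏ i ∈ Finset.range (j+1), (fun i => if h : i < m then (dsort d ⟨i,h⟩) ^ r else 0) i
        = ∏ i ∈ Finset.Iic kj, (dsort d i) ^ r := by
      rw [prod_Iic_eq_range (fun i => (dsort d i) ^ r) kj]
      refine (Finset.prod_congr rfl fun i hi => ?_).symm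
      have him : i < m := by
        simp only [Finset.mem_range] at hi; omega
      simp only [dif_pos him]
    have e2 : ∏ i ∈ Finset.range (j+1), (fun i => if h : i < m then (sv Y ⟨i,h⟩) ^ r else 0) i
        = ∏ i ∈ Finset.Iic kj, (sv Y i) ^ r := by
      rw [prod_Iic_eq_range (fun i => (sv Y i) ^ r) kj]
      refine (Finset.prod_congr rfl fun i hi => ?_).symm
      have him : i < m := by
        simp only [Finset.mem_range] at hi; omega
      simp only [dif_pos him]
    rw [e1, e2]
    rw [Real.finset_prod_rpow _ _ (fun i _ => dsort_nonneg d (fun t => (hdpos t).le) i) r,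
      Real.finset_prod_rpow _ _ (fun i _ => by
        rw [sv_eq_sqrt_dsort]; exact Real.sqrt_nonneg _) r]
    exact Real.rpow_le_rpow
      (Finset.prod_nonneg fun i _ => dsort_nonneg d (fun t => (hdpos t).le) i)
      (hbase kj) hr

end ThmStar

section Blocks

private lemma posDef_conj_invertible {m : ℕ} {D B : Matrix (Fin m) (Fin m) ℂ}
    (hD : D.PosDef) (hB : IsUnit B.det) : (B * D * Bᴴ).PosDef := by
  refine Matrix.PosDef.of_dotProduct_mulVec_pos (hD.posSemidef.mul_mul_conjTranspose_same B).1 fun x hx => ?_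
  have key : star x ⬝ᵥ ((B * D * Bᴴ) *ᵥ x) = star (Bᴴ *ᵥ x) ⬝ᵥ (D *ᵥ (Bᴴ *ᵥ x)) := by
    rw [← Matrix.mulVec_mulVec, ← Matrix.mulVec_mulVec, Matrix.dotProduct_mulVec,
      Matrix.star_mulVec, Matrix.conjTranspose_conjTranspose]
  rw [key]
  refine hD.dotProduct_mulVec_pos (fun h0 => hx ?_)
  have hBH : IsUnit (Bᴴ).det := by
    rw [Matrix.det_conjTranspose]
    exact hB.star
  exact mulVec_zero_of_isUnit hBH h0

private lemma posDef_fromBlocks {n : ℕ} {X Y : Matrix (Fin n) (Fin n) ℂ}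
    (hX : X.PosDef) (hY : Y.PosDef) :
    (Matrix.fromBlocks X 0 0 Y).PosDef := by
  refine Matrix.PosDef.of_dotProduct_mulVec_pos ?_ ?_
  · show (Matrix.fromBlocks X 0 0 Y)ᴴ = _
    rw [Matrix.fromBlocks_conjTranspose, Matrix.conjTranspose_zero, hX.1.eq, hY.1.eq]
  · intro x hx
    set x₁ := x ∘ Sum.inl with hx1
    set x₂ := x ∘ Sum.inr with hx2
    have hmv : (Matrix.fromBlocks X 0 0 Y) *ᵥ x = Sum.elim (X *ᵥ x₁) (Y *ᵥ x₂) := by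
      rw [Matrix.fromBlocks_mulVec]
      simp [Matrix.zero_mulVec]; rfl
    rw [hmv]
    have hdot : star x ⬝ᵥ Sum.elim (X *ᵥ x₁) (Y *ᵥ x₂)
        = star x₁ ⬝ᵥ (X *ᵥ x₁) + star x₂ ⬝ᵥ (Y *ᵥ x₂) := by
      simp only [dotProduct]
      rw [Fintype.sum_sum_type]
      rfl
    rw [hdot]
    have hcases : x₁ ≠ 0 ∨ x₂ ≠ 0 := by
      by_contra hcon
      push_neg at hcon
      refine hx (funext fun i => ?_)
      cases i with
      | inl a => exact congrFun hcon.1 a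
      | inr a => exact congrFun hcon.2 a
    rcases hcases with h | h
    · exact add_pos_of_pos_of_nonneg (hX.dotProduct_mulVec_pos h) (hY.posSemidef.dotProduct_mulVec_nonneg _)
    · exact add_pos_of_nonneg_of_pos (hX.posSemidef.dotProduct_mulVec_nonneg _) (hY.dotProduct_mulVec_pos h)

private lemma posDef_reindex {n : ℕ} (e : Fin n ⊕ Fin n ≃ Fin (n + n))
    {M : Matrix (Fin n ⊕ Fin n) (Fin n ⊕ Fin n) ℂ} (hM : M.PosDef) :
    (Matrix.reindex e e M).PosDef := by
  rw [Matrix.reindex_apply]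
  refine Matrix.PosDef.of_dotProduct_mulVec_pos ?_ ?_
  · show (M.submatrix ⇑e.symm ⇑e.symm)ᴴ = _
    rw [Matrix.conjTranspose_submatrix, hM.1.eq]
  · intro x hx
    have hmv : ∀ i, (M.submatrix ⇑e.symm ⇑e.symm *ᵥ x) i = (M *ᵥ (x ∘ ⇑e)) (e.symm i) := by
      intro i
      simp only [Matrix.mulVec, dotProduct, Matrix.submatrix_apply]
      rw [← Equiv.sum_comp e.symm (fun j => M (e.symm i) j * (x ∘ ⇑e) j)]
      simp
    have hdot : star x ⬝ᵥ (M.submatrix ⇑e.symm ⇑e.symm *ᵥ x)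
        = star (x ∘ ⇑e) ⬝ᵥ (M *ᵥ (x ∘ ⇑e)) := by
      simp only [dotProduct, Pi.star_apply]
      rw [← Equiv.sum_comp e.symm
        (fun j => star ((x ∘ ⇑e) j) * (M *ᵥ (x ∘ ⇑e)) j)]
      refine Finset.sum_congr rfl fun i _ => ?_
      rw [hmv]
      simp
    rw [hdot]
    refine hM.dotProduct_mulVec_pos (fun h0 => hx ?_)
    funext i
    have := congrFun h0 (e.symm i)
    simpa using this

private lemma bm_mul {n : ℕ} (X Y Z T : Matrix (Fin n) (Fin n) ℂ) :
    bm X 0 0 Y * bm Z 0 0 T = bm (X * Z) 0 0 (Y * T) := by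
  simp only [bm, Matrix.reindex_apply, Matrix.submatrix_mul_equiv,
    Matrix.fromBlocks_multiply, Matrix.mul_zero, Matrix.zero_mul, add_zero, zero_add]

private lemma bm_conjTranspose {n : ℕ} (X Y : Matrix (Fin n) (Fin n) ℂ) :
    (bm X 0 0 Y)ᴴ = bm Xᴴ 0 0 Yᴴ := by
  simp only [bm, Matrix.reindex_apply, Matrix.conjTranspose_submatrix,
    Matrix.fromBlocks_conjTranspose, Matrix.conjTranspose_zero]

private lemma bm_one {n : ℕ} : bm (1 : Matrix (Fin n) (Fin n) ℂ) 0 0 1 = 1 := by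
  simp only [bm, Matrix.reindex_apply, Matrix.fromBlocks_one, Matrix.submatrix_one_equiv]

private lemma bm_posDef {n : ℕ} {X Y : Matrix (Fin n) (Fin n) ℂ}
    (hX : X.PosDef) (hY : Y.PosDef) : (bm X 0 0 Y).PosDef :=
  posDef_reindex finSumFinEquiv (posDef_fromBlocks hX hY)

private lemma bm_unitary {n : ℕ} {U W : Matrix (Fin n) (Fin n) ℂ}
    (hU : U ∈ Matrix.unitaryGroup (Fin n) ℂ) (hW : W ∈ Matrix.unitaryGroup (Fin n) ℂ) :
    bm U 0 0 W ∈ Matrix.unitaryGroup (Fin (n + n)) ℂ := by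
  rw [Matrix.mem_unitaryGroup_iff, Matrix.star_eq_conjTranspose, bm_conjTranspose, bm_mul,
    unitary_mul_conjTranspose hU, unitary_mul_conjTranspose hW, bm_one]

end Blocks

section Mrpow

private lemma mrpow_posDef {n : ℕ} {A : Matrix (Fin n) (Fin n) ℂ} (hA : A.PosDef) (r : ℝ) :
    (mrpow A r).PosDef := by
  simp only [mrpow, dif_pos hA.1]
  refine posDef_conj_invertible ?_ ?_
  · rw [Matrix.posDef_diagonal_iff]
    intro i
    exact Complex.zero_lt_real.mpr (Real.rpow_pos_of_pos (hA.eigenvalues_pos i) r)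
  · exact unitary_isUnit_det (hA.1.eigenvectorUnitary.2 : _)

private lemma mrpow_half_mul_self {n : ℕ} {A : Matrix (Fin n) (Fin n) ℂ} (hA : A.PosDef) :
    mrpow A (1/2) * mrpow A (1/2) = A := by
  simp only [mrpow, dif_pos hA.1]
  set U0 := (hA.1.eigenvectorUnitary : Matrix (Fin n) (Fin n) ℂ) with hU0
  have hU1 : U0ᴴ * U0 = 1 := by
    rw [← Matrix.star_eq_conjTranspose]; exact hA.1.eigenvectorUnitary.2.1
  set Dh := Matrix.diagonal (fun i => ((hA.1.eigenvalues i ^ ((1:ℝ)/2) : ℝ) : ℂ)) with hDh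
  rw [show U0 * Dh * U0ᴴ * (U0 * Dh * U0ᴴ) = U0 * (Dh * (U0ᴴ * U0) * Dh) * U0ᴴ by
    simp only [Matrix.mul_assoc]]
  rw [hU1, Matrix.mul_one, hDh, Matrix.diagonal_mul_diagonal]
  have hdd : (fun i => ((hA.1.eigenvalues i ^ ((1:ℝ)/2) : ℝ) : ℂ)
        * ((hA.1.eigenvalues i ^ ((1:ℝ)/2) : ℝ) : ℂ))
      = RCLike.ofReal ∘ hA.1.eigenvalues := by
    funext i
    rw [← Complex.ofReal_mul, ← Real.rpow_add (hA.eigenvalues_pos i)]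
    norm_num
  rw [hdd]
  have hspec := hA.1.spectral_theorem
  rw [Unitary.conjStarAlgAut_apply, Matrix.star_eq_conjTranspose] at hspec
  exact hspec.symm

end Mrpow

theorem stmt6 {n : ℕ} (A B C D U W : Matrix (Fin n) (Fin n) ℂ)
    (hA : A.PosDef) (hB : B.PosDef) (hC : C.PosDef) (hD : D.PosDef)
    (hU : U ∈ Matrix.unitaryGroup (Fin n) ℂ) (hW : W ∈ Matrix.unitaryGroup (Fin n) ℂ)
    (r : ℝ) (hr : 0 ≤ r) :
    ∀ k : Fin (n + n),
      ∑ i ∈ Finset.Iic k,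
          sv (bm (mrpow A (1/2) * U * mrpow B (1/2)) 0 0
                (mrpow C (1/2) * W * mrpow D (1/2))) i ^ (2 * r) ≤
      ∑ i ∈ Finset.Iic k, sv (bm (A * U * B) 0 0 (C * W * D)) i ^ r := by
  intro k
  have hPpd : (bm (mrpow A (1/2)) 0 0 (mrpow C (1/2))).PosDef :=
    bm_posDef (mrpow_posDef hA _) (mrpow_posDef hC _)
  have hQpd : (bm (mrpow B (1/2)) 0 0 (mrpow D (1/2))).PosDef :=
    bm_posDef (mrpow_posDef hB _) (mrpow_posDef hD _)
  have hVu : bm U 0 0 W ∈ Matrix.unitaryGroup (Fin (n + n)) ℂ := bm_unitary hU hW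
  have hPVQ : bm (mrpow A (1/2)) 0 0 (mrpow C (1/2)) * bm U 0 0 W
        * bm (mrpow B (1/2)) 0 0 (mrpow D (1/2))
      = bm (mrpow A (1/2) * U * mrpow B (1/2)) 0 0 (mrpow C (1/2) * W * mrpow D (1/2)) := by
    rw [bm_mul, bm_mul]
  have hthm := thmStar _ _ _ hPpd hQpd hVu r hr k
  rw [hPVQ] at hthm
  have hbig : bm (mrpow A (1/2)) 0 0 (mrpow C (1/2))
        * bm (mrpow A (1/2) * U * mrpow B (1/2)) 0 0 (mrpow C (1/2) * W * mrpow D (1/2))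
        * bm (mrpow B (1/2)) 0 0 (mrpow D (1/2))
      = bm (A * U * B) 0 0 (C * W * D) := by
    rw [bm_mul, bm_mul]
    have e1 : mrpow A (1/2) * (mrpow A (1/2) * U * mrpow B (1/2)) * mrpow B (1/2)
        = mrpow A (1/2) * mrpow A (1/2) * U * (mrpow B (1/2) * mrpow B (1/2)) := by
      simp only [Matrix.mul_assoc]
    have e2 : mrpow C (1/2) * (mrpow C (1/2) * W * mrpow D (1/2)) * mrpow D (1/2)
        = mrpow C (1/2) * mrpow C (1/2) * W * (mrpow D (1/2) * mrpow D (1/2)) := by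
      simp only [Matrix.mul_assoc]
    rw [e1, e2, mrpow_half_mul_self hA, mrpow_half_mul_self hB,
      mrpow_half_mul_self hC, mrpow_half_mul_self hD]
  rw [hbig] at hthm
  exact hthm
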